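/- Let x, x̂ : I → ℝ² be continuously differentiable curves on an interval I forming a Darboux pair with parameter λ ∈ ℝ \ {0} and the arc-length polarization m(t) = 1/|x'(t)|², where |x'(t)|² > 0 for all t. If |x̂(t₀)−x(t₀)|² = 1/λ at one point t₀ ∈ I, then |x̂(t)−x(t)|² = 1/λ for all t ∈ I. -/

import Mathlib

/-!
Write `d = x̂ - x`. Multiplying the Darboux equation `x'·x̂' = λ|x'|² d²` by `x̄'·d̄` and cancelling
`|x'|² ≠ 0` gives `⟨d, x̂'⟩ = λ|d|²⟨d, x'⟩`, so `u = λ|d|² - 1` solves the linear equation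
`u' = 2λ⟨d, x'⟩ u` with continuous coefficient. By uniqueness for this ODE, `u(t₀) = 0` forces
`u ≡ 0`.
-/

/-- The split-complex product on `ℝ²`: `(a,b)·(c,d) = (ac+bd, ad+bc)`. -/
def sprod (u v : ℝ × ℝ) : ℝ × ℝ := (u.1 * v.1 + u.2 * v.2, u.1 * v.2 + u.2 * v.1)

/-- The Lorentz squared norm `|(a,b)|² = a² - b²`. -/
def lsq (u : ℝ × ℝ) : ℝ := u.1 ^ 2 - u.2 ^ 2

/-- `x, x̂` form a Darboux pair with parameter `λ` and polarization `m` on `I`,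
with respect to given derivative functions `x', x̂'`. -/
def DarbouxPair (I : Set ℝ) (x x' xh xh' : ℝ → ℝ × ℝ) (lam : ℝ) (m : ℝ → ℝ) : Prop :=
  ∀ t ∈ I, sprod (x' t) (xh' t) = (lam / m t) • sprod (xh t - x t) (xh t - x t)

open Set

def lorentzInner (u v : ℝ × ℝ) : ℝ := u.1 * v.1 - u.2 * v.2

theorem HasDerivAt.lsq {γ : ℝ → ℝ × ℝ} {γ' : ℝ × ℝ} {t : ℝ} (hγ : HasDerivAt γ γ' t) :
    HasDerivAt (fun s => lsq (γ s)) (2 * lorentzInner (γ t) γ') t := by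
  have h₁ : HasDerivAt (fun s => (γ s).1) γ'.1 t := by
    simpa using hγ.hasFDerivAt.fst.hasDerivAt
  have h₂ : HasDerivAt (fun s => (γ s).2) γ'.2 t := by
    simpa using hγ.hasFDerivAt.snd.hasDerivAt
  refine ((h₁.pow 2).sub (h₂.pow 2)).congr_deriv ?_
  simp only [lorentzInner]
  ring

theorem lorentzInner_eq_of_sprod_eq {p q d : ℝ × ℝ} {lam : ℝ} (hp : lsq p ≠ 0)
    (h : sprod p q = (lam * lsq p) • sprod d d) :
    lorentzInner d q = lam * lsq d * lorentzInner d p := by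
  have h₁ := congrArg Prod.fst h
  have h₂ := congrArg Prod.snd h
  simp only [sprod, Prod.smul_mk, smul_eq_mul] at h₁ h₂
  apply mul_left_cancel₀ hp
  simp only [lsq, lorentzInner] at *
  linear_combination (d.1 * p.1 + d.2 * p.2) * h₁ - (d.1 * p.2 + d.2 * p.1) * h₂

theorem hasDerivAt_lsq_sub_of_sprod_eq {x xh : ℝ → ℝ × ℝ} {p q : ℝ × ℝ} {t lam : ℝ}
    (hx : HasDerivAt x p t) (hxh : HasDerivAt xh q t) (hp : lsq p ≠ 0)
    (h : sprod p q = (lam * lsq p) • sprod (xh t - x t) (xh t - x t)) :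
    HasDerivAt (fun s => lsq (xh s - x s))
      (2 * lorentzInner (xh t - x t) p * (lam * lsq (xh t - x t) - 1)) t := by
  refine (hxh.sub hx).lsq.congr_deriv ?_
  have hq := lorentzInner_eq_of_sprod_eq hp h
  simp only [lorentzInner, Pi.sub_apply, Prod.fst_sub, Prod.snd_sub] at hq ⊢
  linear_combination 2 * hq

theorem eqOn_zero_of_hasDerivAt_smul_self {E : Type*} [NormedAddCommGroup E] [NormedSpace ℝ E]
    {I : Set ℝ} (hI : I.OrdConnected) {c : ℝ → ℝ} {u : ℝ → E} (hc : ContinuousOn c I)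
    (hu : ∀ t ∈ I, HasDerivAt u (c t • u t) t) {t₀ : ℝ} (ht₀ : t₀ ∈ I) (h₀ : u t₀ = 0) :
    EqOn u 0 I := by
  intro t₁ ht₁
  have hsub : uIcc t₀ t₁ ⊆ I := hI.uIcc_subset ht₀ ht₁
  obtain ⟨M, hM⟩ := isCompact_uIcc.exists_bound_of_continuousOn (hc.mono hsub)
  have hv : ∀ t ∈ uIcc t₀ t₁, LipschitzOnWith M.toNNReal (c t • · : E → E) univ := by
    intro t ht
    refine ((lipschitzWith_smul (c t)).weaken ?_).lipschitzOnWith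
    rw [← NNReal.coe_le_coe, coe_nnnorm]
    exact (hM t ht).trans (Real.le_coe_toNNReal M)
  have hu' : ∀ t ∈ uIcc t₀ t₁, HasDerivAt u (c t • u t) t := fun t ht => hu t (hsub ht)
  have hcont : ContinuousOn u (uIcc t₀ t₁) := HasDerivAt.continuousOn hu'
  have h0 : ∀ t : ℝ, HasDerivWithinAt (0 : ℝ → E) (c t • (0 : ℝ → E) t) univ t := fun t => by
    simp
  rcases le_total t₀ t₁ with h | h
  · rw [uIcc_of_le h] at hv hu' hcont
    exact ODE_solution_unique_of_mem_Icc_right (fun t ht => hv t (Ico_subset_Icc_self ht)) hcont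
      (fun t ht => (hu' t (Ico_subset_Icc_self ht)).hasDerivWithinAt) (fun _ _ => mem_univ _)
      continuousOn_const (fun t _ => (h0 t).mono (subset_univ _)) (fun _ _ => mem_univ _) h₀
      (right_mem_Icc.2 h)
  · rw [uIcc_of_ge h] at hv hu' hcont
    exact ODE_solution_unique_of_mem_Icc_left (fun t ht => hv t (Ioc_subset_Icc_self ht)) hcont
      (fun t ht => (hu' t (Ioc_subset_Icc_self ht)).hasDerivWithinAt) (fun _ _ => mem_univ _)
      continuousOn_const (fun t _ => (h0 t).mono (subset_univ _)) (fun _ _ => mem_univ _) h₀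
      (left_mem_Icc.2 h)

theorem darboux_constant_distance_general (I : Set ℝ) (hI : I.OrdConnected)
    (x xh x' xh' : ℝ → ℝ × ℝ) (lam : ℝ) (hlam : lam ≠ 0)
    (m : ℝ → ℝ)
    (hsp : ∀ t ∈ I, 0 < lsq (x' t))
    (hm : ∀ t ∈ I, m t = 1 / lsq (x' t))
    (hx : ∀ t ∈ I, HasDerivAt x (x' t) t)
    (hxh : ∀ t ∈ I, HasDerivAt xh (xh' t) t)
    (hx'c : ContinuousOn x' I)
    (hpair : DarbouxPair I x x' xh xh' lam m)
    (t₀ : ℝ) (ht₀ : t₀ ∈ I) (hinit : lsq (xh t₀ - x t₀) = 1 / lam) :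
    ∀ t ∈ I, lsq (xh t - x t) = 1 / lam := by
  set G : ℝ → ℝ := fun t => 2 * lam * lorentzInner (xh t - x t) (x' t)
  have hGc : ContinuousOn G I := by
    have hdc : ContinuousOn (fun t => xh t - x t) I := fun t ht =>
      ((hxh t ht).sub (hx t ht)).continuousAt.continuousWithinAt
    exact continuousOn_const.mul ((hdc.fst.mul hx'c.fst).sub (hdc.snd.mul hx'c.snd))
  have hderiv : ∀ t ∈ I, HasDerivAt (fun s => lam * lsq (xh s - x s) - 1)
      (G t • (lam * lsq (xh t - x t) - 1)) t := by
    intro t ht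
    have hpair_t : sprod (x' t) (xh' t) = (lam * lsq (x' t)) • sprod (xh t - x t) (xh t - x t) := by
      rw [hpair t ht, hm t ht, div_div_eq_mul_div, div_one]
    refine (((hasDerivAt_lsq_sub_of_sprod_eq (hx t ht) (hxh t ht) (hsp t ht).ne' hpair_t).const_mul
      lam).sub_const 1).congr_deriv ?_
    simp only [G, smul_eq_mul]
    ring
  have hzero := eqOn_zero_of_hasDerivAt_smul_self hI hGc hderiv ht₀
    (by rw [hinit, mul_one_div_cancel hlam, sub_self])
  intro t ht
  exact eq_one_div_of_mul_eq_one_right (sub_eq_zero.1 (hzero ht))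

/-- For a C¹ Darboux pair on an interval, arc-length polarized for `x`,
if `|x̂−x|² = 1/λ` at one point, then `|x̂−x|² = 1/λ` everywhere. -/
theorem darboux_constant_distance (I : Set ℝ) (hI : I.OrdConnected)
    (x xh x' xh' : ℝ → ℝ × ℝ) (lam : ℝ) (hlam : lam ≠ 0)
    (m : ℝ → ℝ)
    (hsp : ∀ t ∈ I, 0 < lsq (x' t))
    (hm : ∀ t ∈ I, m t = 1 / lsq (x' t))
    (hx : ∀ t ∈ I, HasDerivAt x (x' t) t)
    (hxh : ∀ t ∈ I, HasDerivAt xh (xh' t) t)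
    (hx'c : ContinuousOn x' I) (hxh'c : ContinuousOn xh' I)
    (hpair : DarbouxPair I x x' xh xh' lam m)
    (t₀ : ℝ) (ht₀ : t₀ ∈ I) (hinit : lsq (xh t₀ - x t₀) = 1 / lam) :
    ∀ t ∈ I, lsq (xh t - x t) = 1 / lam :=
  darboux_constant_distance_general I hI x xh x' xh' lam hlam m hsp hm hx hxh hx'c hpair t₀ ht₀
    hinit
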